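/- Let G = ⟨a⟩ ≅ Z_{2^n} with n ≥ 3, and let h = a^α x y^γ in Hol(G) with 1 ≤ γ ≤ 2^{n-2} - 1. Then the order of h is 2^{n-1}/γ₂ if α is odd, and 2^{n-2}/γ₂ if α is even, where γ₂ is the 2-part of γ. -/
import Mathlib


/-- The element `a^b x^?y^?` of the holomorph of `ZMod N`, viewed as the permutation
`g ↦ (g + b) * u` of `ZMod N`: first translate by `b` (right multiplication by `a^b`),
then apply the automorphism "multiplication by the unit `u`". -/
def aff (N : ℕ) (u : (ZMod N)ˣ) (b : ZMod N) : Equiv.Perm (ZMod N) :=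
  (Equiv.addRight b).trans (Units.mulRight u)

/-- The automorphism `y : a ↦ a^5` of `ZMod (2^n)` as a unit. -/
def u5 (n : ℕ) : (ZMod (2 ^ n))ˣ :=
  ZMod.unitOfCoprime 5 (Nat.Coprime.pow_right n (by decide))

/- ## Auxiliary lemmas -/

lemma my_v2_eq {t x y : ℕ} (h : x = 2 ^ t * y) (hy : ¬ 2 ∣ y) : padicValNat 2 x = t := by
  have hy0 : y ≠ 0 := by rintro rfl; exact hy (dvd_zero 2)
  subst h
  rw [padicValNat.mul (pow_ne_zero _ two_ne_zero) hy0, padicValNat.prime_pow,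
    padicValNat.eq_zero_of_not_dvd hy, add_zero]

lemma my_five_pow_mod4 (k : ℕ) : 5 ^ k % 4 = 1 := by
  rw [Nat.pow_mod]; simp

lemma my_v2_five_pow_sub_one (k : ℕ) (hk : k ≠ 0) :
    padicValNat 2 (5 ^ k - 1) = padicValNat 2 k + 2 := by
  induction k using Nat.strong_induction_on with
  | _ k ih =>
    rcases Nat.even_or_odd k with he | ho
    · -- k = 2 * j
      obtain ⟨j, hj⟩ := he
      have hk2 : k = 2 * j := by omega
      have hj0 : j ≠ 0 := by omega
      have hjk : j < k := by omega
      have h51 : 1 < 5 ^ j := Nat.one_lt_pow hj0 (by norm_num)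
      have hfac : 5 ^ k - 1 = (5 ^ j + 1) * (5 ^ j - 1) := by
        have : 5 ^ k = (5 ^ j) ^ 2 := by rw [hk2, pow_mul']
        rw [this]
        have := Nat.sq_sub_sq (5 ^ j) 1
        simpa using this
      have hplus : padicValNat 2 (5 ^ j + 1) = 1 := by
        have h4 : 5 ^ j % 4 = 1 := my_five_pow_mod4 j
        have hdec : 5 ^ j + 1 = 2 ^ 1 * ((5 ^ j + 1) / 2) ∧ ¬ 2 ∣ (5 ^ j + 1) / 2 := by
          omega
        exact my_v2_eq hdec.1 hdec.2
      have hne1 : 5 ^ j + 1 ≠ 0 := by omega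
      have hne2 : 5 ^ j - 1 ≠ 0 := by omega
      rw [hfac, padicValNat.mul hne1 hne2, hplus, ih j hjk hj0]
      have hvk : padicValNat 2 k = padicValNat 2 j + 1 := by
        rw [hk2, padicValNat.mul two_ne_zero hj0, padicValNat.self (by norm_num)]
        omega
      omega
    · -- k odd
      obtain ⟨j, hj⟩ := ho
      have h8 : 5 ^ k % 8 = 5 := by
        subst hj
        rw [pow_succ, pow_mul, Nat.mul_mod, Nat.pow_mod]
        norm_num
      have h1 : 1 ≤ 5 ^ k := Nat.one_le_pow _ _ (by norm_num)
      have hv0 : padicValNat 2 k = 0 :=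
        padicValNat.eq_zero_of_not_dvd (by omega)
      have hdec : 5 ^ k - 1 = 2 ^ 2 * ((5 ^ k - 1) / 4) ∧ ¬ 2 ∣ (5 ^ k - 1) / 4 := by
        omega
      rw [my_v2_eq hdec.1 hdec.2, hv0]

lemma aff_apply (N : ℕ) (u : (ZMod N)ˣ) (b g : ZMod N) : aff N u b g = (g + b) * u := rfl

lemma aff_pow_apply (N : ℕ) (u : (ZMod N)ˣ) (b : ZMod N) (k : ℕ) (g : ZMod N) :
    ((aff N u b) ^ k) g
      = g * (u : ZMod N) ^ k + b * ∑ j ∈ Finset.range k, (u : ZMod N) ^ (j + 1) := by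
  induction k generalizing g with
  | zero => simp
  | succ k ih =>
    rw [pow_succ, Equiv.Perm.mul_apply, ih, aff_apply, Finset.sum_range_succ]
    ring

lemma aff_pow_eq_one_iff (N : ℕ) (u : (ZMod N)ˣ) (b : ZMod N) (k : ℕ) :
    (aff N u b) ^ k = 1 ↔
      ((u : ZMod N) ^ k = 1 ∧ b * ∑ j ∈ Finset.range k, (u : ZMod N) ^ (j + 1) = 0) := by
  constructor
  · intro h
    have h0 := Equiv.ext_iff.mp h 0
    have h1 := Equiv.ext_iff.mp h 1
    rw [aff_pow_apply] at h0 h1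
    simp only [zero_mul, zero_add, one_mul, Equiv.Perm.one_apply] at h0 h1
    refine ⟨?_, h0⟩
    rw [h0, add_zero] at h1
    exact h1
  · rintro ⟨h1, h2⟩
    ext g
    rw [aff_pow_apply, h1, h2, mul_one, add_zero, Equiv.Perm.one_apply]

/-- The geometric sum `∑_{j<k} (-c)^{j+1}` over the integers. -/
def Sg (c k : ℕ) : ℤ := ∑ j ∈ Finset.range k, (-(c : ℤ)) ^ (j + 1)

lemma Sg_eq (c k : ℕ) : Sg c k = (-(c : ℤ)) * ∑ j ∈ Finset.range k, (-(c : ℤ)) ^ j := by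
  rw [Sg, Finset.mul_sum]
  exact Finset.sum_congr rfl fun j _ => by rw [pow_succ']

lemma Sg_geom (c k : ℕ) (hk : Even k) :
    Sg c k * ((c : ℤ) + 1) = (c : ℤ) * ((c : ℤ) ^ k - 1) := by
  have hG := geom_sum_mul (-(c : ℤ)) k
  rw [hk.neg_pow] at hG
  have hSg := Sg_eq c k
  linear_combination ((c : ℤ) + 1) * hSg + (c : ℤ) * hG

/-- For `h = a^α x y^γ ∈ Hol(Z_{2^n})` with `1 ≤ γ ≤ 2^{n-2} - 1`, the order of `h` is
`2^{n-1}/γ₂` if `α` is odd and `2^{n-2}/γ₂` if `α` is even, where `γ₂` is the 2-part of `γ`. -/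
theorem orderOf_axy (n : ℕ) (hn : 3 ≤ n) (α γ : ℕ) (hγ1 : 1 ≤ γ)
    (hγ2 : γ ≤ 2 ^ (n - 2) - 1) :
    orderOf (aff (2 ^ n) (-(u5 n ^ γ)) ((α : ℕ) : ZMod (2 ^ n)))
      = if Odd α then 2 ^ (n - 1) / 2 ^ (padicValNat 2 γ)
        else 2 ^ (n - 2) / 2 ^ (padicValNat 2 γ) := by
  set N := 2 ^ n with hN
  set v := padicValNat 2 γ with hv
  -- `v ≤ n - 3`
  have h2v : 2 ^ v ≤ γ := Nat.le_of_dvd hγ1 pow_padicValNat_dvd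
  have hpos : 1 ≤ 2 ^ (n - 2) := Nat.one_le_two_pow
  have h2v' : 2 ^ v < 2 ^ (n - 2) := by omega
  have hvn : v < n - 2 := (Nat.pow_lt_pow_iff_right (by norm_num)).mp h2v'
  set t := n - 3 - v with ht
  have hnvt : n = v + t + 3 := by omega
  set c := 5 ^ γ with hc
  set m := 2 ^ (t + 1) with hm
  -- basic parity facts
  have hcodd : ¬ 2 ∣ c := by
    have := my_five_pow_mod4 γ; omega
  have hc4 : c % 4 = 1 := my_five_pow_mod4 γ
  -- d : half of c + 1, odd
  set d := (c + 1) / 2 with hd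
  have hd2 : c + 1 = 2 * d ∧ ¬ 2 ∣ d := by omega
  -- valuation of c^m - 1 is exactly n
  have hγm : γ * m ≠ 0 := by positivity
  have hcm : padicValNat 2 (c ^ m - 1) = n := by
    rw [hc, ← pow_mul, my_v2_five_pow_sub_one _ hγm,
      padicValNat.mul (by omega) (by positivity), hm, padicValNat.prime_pow]
    omega
  have hcm1 : 1 < c ^ m := Nat.one_lt_pow (by positivity)
    (Nat.one_lt_pow (by omega) (by norm_num))
  have hcm0 : c ^ m - 1 ≠ 0 := by omega
  have hdvd_n : 2 ^ n ∣ c ^ m - 1 := by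
    rw [← hcm]; exact pow_padicValNat_dvd
  have hndvd_n1 : ¬ 2 ^ (n + 1) ∣ c ^ m - 1 := by
    rw [padicValNat_dvd_iff_le hcm0, hcm]; omega
  obtain ⟨e, hee⟩ := hdvd_n
  have heodd : ¬ 2 ∣ e := by
    rintro ⟨f, rfl⟩
    exact hndvd_n1 ⟨f, by rw [hee]; ring⟩
  -- move to ℤ
  have hm_even : Even m := ⟨2 ^ t, by rw [hm]; ring⟩
  have heZ : (c : ℤ) ^ m - 1 = 2 ^ n * (e : ℤ) := by
    have h1 : 1 ≤ c ^ m := by omega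
    zify [h1] at hee
    exact_mod_cast hee
  have hdZ : (c : ℤ) + 1 = 2 * (d : ℤ) := by exact_mod_cast hd2.1
  have hmain := Sg_geom c m hm_even
  rw [hdZ, heZ] at hmain
  have hpow2 : (2 : ℤ) ^ n = 2 * 2 ^ (n - 1) := by
    rw [← pow_succ']; congr 1; omega
  have h2 : Sg c m * (d : ℤ) = (c : ℤ) * (2 ^ (n - 1) * (e : ℤ)) := by
    apply mul_left_cancel₀ (a := (2 : ℤ)) two_ne_zero
    linear_combination hmain + (c : ℤ) * (e : ℤ) * hpow2
  have hco : IsCoprime ((2 : ℤ) ^ (n - 1)) (d : ℤ) := by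
    have hnc : Nat.Coprime (2 ^ (n - 1)) d :=
      Nat.Coprime.pow_left _ ((Nat.prime_two.coprime_iff_not_dvd).mpr hd2.2)
    have := hnc.isCoprime
    push_cast at this
    exact this
  have hSdvd : (2 : ℤ) ^ (n - 1) ∣ Sg c m :=
    hco.dvd_of_dvd_mul_right (h2 ▸ ⟨(c : ℤ) * e, by ring⟩)
  obtain ⟨T, hT⟩ := hSdvd
  have hTd : T * (d : ℤ) = (c : ℤ) * (e : ℤ) :=
    mul_left_cancel₀ (pow_ne_zero (n - 1) (two_ne_zero (α := ℤ)))
      (by linear_combination h2 - (d : ℤ) * hT)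
  have hcoddZ : ¬ (2 : ℤ) ∣ (c : ℤ) := by exact_mod_cast hcodd
  have heoddZ : ¬ (2 : ℤ) ∣ (e : ℤ) := by exact_mod_cast heodd
  have hTodd : ¬ (2 : ℤ) ∣ T := by
    intro h2T
    have : (2 : ℤ) ∣ (c : ℤ) * e := hTd ▸ h2T.mul_right d
    rcases (Int.prime_two.dvd_mul).mp this with h | h
    exacts [hcoddZ h, heoddZ h]
  have hSnot : ¬ (2 : ℤ) ^ n ∣ Sg c m := by
    rintro ⟨q, hq⟩
    apply hTodd
    refine ⟨q, mul_left_cancel₀ (pow_ne_zero (n - 1) (two_ne_zero (α := ℤ))) ?_⟩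
    linear_combination hq - hT + q * hpow2
  -- translate the permutation conditions
  set uu : (ZMod N)ˣ := -(u5 n ^ γ) with huu
  have hw : ((uu : ZMod N)) = ((-(c : ℤ) : ℤ) : ZMod N) := by
    rw [huu, Units.val_neg, Units.val_pow_eq_pow_val, u5, ZMod.coe_unitOfCoprime]
    push_cast [hc]
    ring
  have hwpow : ∀ k : ℕ, (uu : ZMod N) ^ k = (((-(c : ℤ)) ^ k : ℤ) : ZMod N) := by
    intro k; rw [hw]; push_cast; ring
  have hSsum : ∀ k : ℕ, ∑ j ∈ Finset.range k, (uu : ZMod N) ^ (j + 1)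
      = ((Sg c k : ℤ) : ZMod N) := by
    intro k
    rw [Sg, Int.cast_sum]
    exact Finset.sum_congr rfl fun j _ => hwpow (j + 1)
  set b : ZMod N := ((α : ℕ) : ZMod N) with hb
  have key : ∀ k : ℕ, (aff N uu b) ^ k = 1 ↔
      ((N : ℤ) ∣ (-(c : ℤ)) ^ k - 1 ∧ (N : ℤ) ∣ (α : ℤ) * Sg c k) := by
    intro k
    rw [aff_pow_eq_one_iff, hwpow, hSsum]
    constructor
    · rintro ⟨h1, h2⟩
      constructor
      · rw [← ZMod.intCast_zmod_eq_zero_iff_dvd, Int.cast_sub, Int.cast_one, h1, sub_self]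
      · rw [← ZMod.intCast_zmod_eq_zero_iff_dvd, Int.cast_mul, Int.cast_natCast]
        exact h2
    · rintro ⟨h1, h2⟩
      have h1' := (ZMod.intCast_zmod_eq_zero_iff_dvd _ N).mpr h1
      have h2' := (ZMod.intCast_zmod_eq_zero_iff_dvd _ N).mpr h2
      rw [Int.cast_sub, Int.cast_one, sub_eq_zero] at h1'
      rw [Int.cast_mul, Int.cast_natCast] at h2'
      exact ⟨h1', h2'⟩
  -- the unit-power conditions
  have hNZ : ((N : ℤ)) = 2 ^ n := by rw [hN]; push_cast; ring
  have hu_m : (N : ℤ) ∣ (-(c : ℤ)) ^ m - 1 := by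
    rw [hm_even.neg_pow, hNZ]
    exact heZ ▸ ⟨(e : ℤ), rfl⟩
  have hu_m2 : ¬ (N : ℤ) ∣ (-(c : ℤ)) ^ (2 ^ t) - 1 := by
    rw [hNZ]
    rcases Nat.eq_zero_or_pos t with ht0 | htpos
    · rw [ht0]
      simp only [pow_zero, pow_one]
      rintro ⟨q, hq⟩
      have : (2 : ℤ) ^ n ∣ ((c + 1 : ℕ) : ℤ) := ⟨-q, by push_cast; linear_combination -hq⟩
      have h1 : (2 : ℕ) ^ n ∣ c + 1 := by exact_mod_cast this
      have h4 : (4 : ℕ) ∣ c + 1 :=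
        dvd_trans ⟨2 ^ (n - 2), by rw [show (4:ℕ) = 2^2 from rfl, ← pow_add]; congr 1; omega⟩ h1
      omega
    · have heven : Even (2 ^ t) :=
        ⟨2 ^ (t - 1), by rw [← two_mul, ← pow_succ']; congr 1; omega⟩
      rw [heven.neg_pow]
      intro hdvd
      have hc1 : 1 < c ^ 2 ^ t := Nat.one_lt_pow (by positivity)
        (Nat.one_lt_pow (by omega) (by norm_num))
      have hNdvd : (2 : ℕ) ^ n ∣ c ^ 2 ^ t - 1 := by
        have : ((c ^ 2 ^ t - 1 : ℕ) : ℤ) = (c : ℤ) ^ 2 ^ t - 1 := by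
          push_cast [Nat.cast_sub (by omega : 1 ≤ c ^ 2 ^ t)]; ring
        rw [← Int.natCast_dvd_natCast]; push_cast; rw [this] at *; exact_mod_cast hdvd
      have hval : padicValNat 2 (c ^ 2 ^ t - 1) = n - 1 := by
        rw [hc, ← pow_mul, my_v2_five_pow_sub_one _ (by positivity),
          padicValNat.mul (by omega) (by positivity), padicValNat.prime_pow]
        omega
      rw [padicValNat_dvd_iff_le (by omega)] at hNdvd
      omega
  -- now compute the order
  set h : Equiv.Perm (ZMod N) := aff N uu b with hh
  have hv2 : 2 ^ v ∣ γ := pow_padicValNat_dvd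
  rcases Nat.even_or_odd α with hαe | hαo
  · -- α even : order is 2^(t+1) = 2^(n-2)/2^v
    rw [if_neg (Nat.not_odd_iff_even.mpr hαe)]
    obtain ⟨β, hβ⟩ := hαe
    have hpow1 : h ^ m = 1 := by
      rw [key]
      refine ⟨hu_m, ?_⟩
      rw [hT, hNZ, hpow2]
      exact ⟨(β : ℤ) * T, by push_cast [hβ]; ring⟩
    have hpow2' : h ^ (2 ^ t) ≠ 1 := by
      rw [Ne, key]
      rintro ⟨h1, -⟩
      exact hu_m2 h1
    have hdvd : orderOf h ∣ 2 ^ (t + 1) := orderOf_dvd_of_pow_eq_one hpow1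
    obtain ⟨j, hj, hoj⟩ := (Nat.dvd_prime_pow Nat.prime_two).mp hdvd
    have hjt : j = t + 1 := by
      by_contra hne
      have : orderOf h ∣ 2 ^ t := hoj ▸ pow_dvd_pow 2 (by omega)
      exact hpow2' (orderOf_dvd_iff_pow_eq_one.mp this)
    rw [hoj, hjt, Nat.pow_div (by omega) (by norm_num)]
    congr 1
    omega
  · -- α odd : order is 2^(t+2) = 2^(n-1)/2^v
    rw [if_pos hαo]
    obtain ⟨β, hβ⟩ := hαo
    have hS2m : (N : ℤ) ∣ Sg c (2 * m) := by
      have hsplit : Sg c (2 * m) = Sg c m + (-(c : ℤ)) ^ m * Sg c m := by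
        rw [Sg, Sg, two_mul, Finset.sum_range_add, Finset.mul_sum]
        congr 1
        exact Finset.sum_congr rfl fun j _ => by rw [← pow_add, Nat.add_assoc]
      rw [hsplit, hm_even.neg_pow]
      have hc1 : (c : ℤ) ^ m = 1 + 2 ^ n * (e : ℤ) := by linear_combination heZ
      rw [hc1, hT, hNZ, hpow2]
      exact ⟨T + 2 ^ (n - 1) * (e : ℤ) * T, by ring⟩
    have hpow1 : h ^ (2 * m) = 1 := by
      rw [key]
      constructor
      · have : (-(c : ℤ)) ^ (2 * m) - 1
            = ((-(c : ℤ)) ^ m - 1) * ((-(c : ℤ)) ^ m + 1) := by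
          rw [mul_comm 2 m, pow_mul]; ring
        rw [this]
        exact hu_m.mul_right _
      · exact hS2m.mul_left _
    have hpowm : h ^ m ≠ 1 := by
      rw [Ne, key]
      rintro ⟨-, h2'⟩
      rw [hNZ, hT] at h2'
      obtain ⟨q, hq⟩ := h2'
      apply hTodd
      have hαZ : (α : ℤ) = 2 * β + 1 := by exact_mod_cast hβ
      refine ⟨q - (β : ℤ) * T, ?_⟩
      have := mul_left_cancel₀ (pow_ne_zero (n - 1) (two_ne_zero (α := ℤ)))
        (show (2:ℤ) ^ (n-1) * ((α : ℤ) * T) = 2 ^ (n-1) * (2 * q) by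
          linear_combination hq + q * hpow2)
      linear_combination this - T * hαZ
    have h2m : 2 * m = 2 ^ (t + 2) := by rw [hm]; ring
    have hdvd : orderOf h ∣ 2 ^ (t + 2) := h2m ▸ orderOf_dvd_of_pow_eq_one hpow1
    obtain ⟨j, hj, hoj⟩ := (Nat.dvd_prime_pow Nat.prime_two).mp hdvd
    have hjt : j = t + 2 := by
      by_contra hne
      have : orderOf h ∣ 2 ^ (t + 1) := hoj ▸ pow_dvd_pow 2 (by omega)
      exact hpowm (orderOf_dvd_iff_pow_eq_one.mp (hm ▸ this))
    rw [hoj, hjt, Nat.pow_div (by omega) (by norm_num)]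
    congr 1
    omega
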